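/- arXiv:1505.06905 — 2 statements merged into one kernel-verified Lean document; each statement's English description precedes it below -/
import Mathlib

section
/- For all real χ ≥ 1 and complex ω = a + ib with 0 ≤ a ≤ 1, the upper incomplete gamma function satisfies |Γ(ω+1, χ)| ≤ 2·e^{-χ}·χ^{a+1}. -/
/-!
For `t ≥ 1` and `Re ω ≤ 1` the integrand is bounded in norm by `e^{-t} t`, whose integral over
`(χ, ∞)` is `(χ + 1) e^{-χ}` (an antiderivative is `-(t + 1) e^{-t}`). Finally
`χ + 1 ≤ 2χ ≤ 2χ^{Re ω + 1}` because `χ ≥ 1` and `Re ω ≥ 0`.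
-/

open MeasureTheory Set Filter Topology

lemma norm_cexp_neg_mul_cpow_le {t : ℝ} (ht : 1 ≤ t) {ω : ℂ} (hω : ω.re ≤ 1) :
    ‖Complex.exp (-(t : ℂ)) * (t : ℂ) ^ ω‖ ≤ Real.exp (-t) * t := by
  rw [norm_mul, Complex.norm_exp, Complex.norm_cpow_eq_rpow_re_of_pos (by linarith)]
  simpa using mul_le_mul_of_nonneg_left
    (Real.rpow_le_rpow_of_exponent_le ht hω |>.trans_eq (Real.rpow_one t)) (Real.exp_nonneg (-t))

lemma integrableOn_exp_neg_mul_self_Ioi {c : ℝ} (hc : 0 ≤ c) :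
    IntegrableOn (fun t : ℝ => Real.exp (-t) * t) (Ioi c) := by
  simpa [show (2 : ℝ) - 1 = 1 by norm_num] using
    (Real.GammaIntegral_convergent two_pos).mono_set (Ioi_subset_Ioi hc)

lemma hasDerivAt_neg_add_one_mul_exp_neg (x : ℝ) :
    HasDerivAt (fun t : ℝ => -(t + 1) * Real.exp (-t)) (Real.exp (-x) * x) x := by
  refine (((hasDerivAt_id' x).add_const 1).neg.mul (hasDerivAt_neg x).exp).congr_deriv ?_
  simp only [Pi.neg_apply]
  ring

lemma tendsto_neg_add_one_mul_exp_neg_atTop :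
    Tendsto (fun t : ℝ => -(t + 1) * Real.exp (-t)) atTop (𝓝 0) := by
  have h := ((Real.tendsto_pow_mul_exp_neg_atTop_nhds_zero 1).add
    Real.tendsto_exp_neg_atTop_nhds_zero).neg
  simp only [pow_one, add_zero, neg_zero] at h
  exact h.congr fun t => by ring

lemma integral_exp_neg_mul_self_Ioi {c : ℝ} (hc : 0 ≤ c) :
    ∫ t in Ioi c, Real.exp (-t) * t = (c + 1) * Real.exp (-c) := by
  rw [integral_Ioi_of_hasDerivAt_of_tendsto' (fun x _ => hasDerivAt_neg_add_one_mul_exp_neg x)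
    (integrableOn_exp_neg_mul_self_Ioi hc) tendsto_neg_add_one_mul_exp_neg_atTop]
  ring

lemma norm_integral_cexp_neg_mul_cpow_Ioi_le {c : ℝ} (hc : 1 ≤ c) {ω : ℂ} (hω : ω.re ≤ 1) :
    ‖∫ t in Ioi c, Complex.exp (-(t : ℂ)) * (t : ℂ) ^ ω‖ ≤ (c + 1) * Real.exp (-c) := by
  calc ‖∫ t in Ioi c, Complex.exp (-(t : ℂ)) * (t : ℂ) ^ ω‖
      ≤ ∫ t in Ioi c, ‖Complex.exp (-(t : ℂ)) * (t : ℂ) ^ ω‖ := norm_integral_le_integral_norm _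
    _ ≤ ∫ t in Ioi c, Real.exp (-t) * t :=
        setIntegral_mono_of_nonneg (fun _ _ => norm_nonneg _)
          (fun t ht => norm_cexp_neg_mul_cpow_le (hc.trans (le_of_lt ht)) hω)
          (integrableOn_exp_neg_mul_self_Ioi (by linarith))
    _ = (c + 1) * Real.exp (-c) := integral_exp_neg_mul_self_Ioi (by linarith)

/-- Upper incomplete gamma bound for `0 ≤ Re ω ≤ 1`, `χ ≥ 1`:
`|Γ(ω+1, χ)| ≤ 2 e^{-χ} χ^{Re ω + 1}`, where
`Γ(s, χ) = ∫_χ^∞ e^{-t} t^{s-1} dt` (so `Γ(ω+1,χ) = ∫_χ^∞ e^{-t} t^ω dt`). -/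
theorem upper_incomplete_gamma_bound_zeroone (χ : ℝ) (hχ : 1 ≤ χ) (ω : ℂ)
    (h₁ : 0 ≤ ω.re) (h₂ : ω.re ≤ 1) :
    ‖∫ t in Set.Ioi χ, Complex.exp (-(t : ℂ)) * (t : ℂ) ^ ω‖ ≤
      2 * Real.exp (-χ) * χ ^ (ω.re + 1) := by
  have hχ_le_rpow : χ ≤ χ ^ (ω.re + 1) := by
    simpa using Real.rpow_le_rpow_of_exponent_le hχ (show (1 : ℝ) ≤ ω.re + 1 by linarith)
  calc ‖∫ t in Set.Ioi χ, Complex.exp (-(t : ℂ)) * (t : ℂ) ^ ω‖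
      ≤ (χ + 1) * Real.exp (-χ) := norm_integral_cexp_neg_mul_cpow_Ioi_le hχ h₂
    _ ≤ 2 * χ ^ (ω.re + 1) * Real.exp (-χ) := by
        gcongr
        linarith
    _ = 2 * Real.exp (-χ) * χ ^ (ω.re + 1) := by ring
end

section
/- For all real χ ≥ 1 and complex ω = a + ib with -1 ≤ a ≤ χ, the upper incomplete gamma function satisfies |Γ(ω+1, χ)| ≤ 2·e^{-χ}·χ^{a+1}. -/
/-!
For `t ≥ χ ≥ 1` and `a = Re ω ≤ χ` we have `(t/χ)^{a-1} ≤ (t/χ)^{χ-1} ≤ e^{(χ-1)(t/χ-1)}` by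
`log y ≤ y - 1`, i.e. `e^{-t} t^a ≤ e^{-χ} χ^{a-1} · t e^{-(t-χ)/χ}`. The right-hand side is
integrated in closed form: `∫_χ^∞ t e^{-(t-χ)/χ} dt = 2χ²`.
-/

open MeasureTheory Set Filter Real Topology

section MulExpIntegral

variable {x b : ℝ}

lemma hasDerivAt_mul_exp_neg_mul_sub_antideriv (hb : b ≠ 0) (t : ℝ) :
    HasDerivAt (fun t => -(t / b + 1 / b ^ 2) * exp (-(b * (t - x))))
      (t * exp (-(b * (t - x)))) t := by
  have hlin : HasDerivAt (fun t => -(t / b + 1 / b ^ 2)) (-(1 / b)) t :=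
    (((hasDerivAt_id' t).div_const b).add_const (1 / b ^ 2)).neg
  have hexp : HasDerivAt (fun t => exp (-(b * (t - x)))) (exp (-(b * (t - x))) * -b) t := by
    simpa using (((hasDerivAt_id t).sub_const x).const_mul b).neg.exp
  refine (hlin.mul hexp).congr_deriv ?_
  field_simp
  ring

lemma tendsto_mul_exp_neg_mul_sub_antideriv_atTop (hb : 0 < b) :
    Tendsto (fun t => -(t / b + 1 / b ^ 2) * exp (-(b * (t - x)))) atTop (𝓝 0) := by
  have hdecay (s : ℝ) : Tendsto (fun t : ℝ => t ^ s * exp (-(b * (t - x)))) atTop (𝓝 0) := by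
    convert (tendsto_rpow_mul_exp_neg_mul_atTop_nhds_zero s b hb).const_mul (exp (b * x))
      using 2
    · rw [mul_left_comm, ← exp_add]
      ring_nf
    · simp
  convert ((hdecay 1).div_const b).add ((hdecay 0).div_const (b ^ 2)) |>.neg using 2 with t
  · simp only [rpow_one, rpow_zero]
    ring
  · simp

lemma integrableOn_Ioi_mul_exp_neg_mul_sub (hx : 0 ≤ x) (hb : 0 < b) :
    IntegrableOn (fun t => t * exp (-(b * (t - x)))) (Ioi x) :=
  integrableOn_Ioi_deriv_of_nonneg'
    (fun t _ => hasDerivAt_mul_exp_neg_mul_sub_antideriv hb.ne' t)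
    (fun _ ht => mul_nonneg (hx.trans (le_of_lt ht)) (exp_pos _).le)
    (tendsto_mul_exp_neg_mul_sub_antideriv_atTop hb)

lemma integral_Ioi_mul_exp_neg_mul_sub (hx : 0 ≤ x) (hb : 0 < b) :
    ∫ t in Ioi x, t * exp (-(b * (t - x))) = x / b + 1 / b ^ 2 := by
  rw [integral_Ioi_of_hasDerivAt_of_nonneg'
    (fun t _ => hasDerivAt_mul_exp_neg_mul_sub_antideriv hb.ne' t)
    (fun _ ht => mul_nonneg (hx.trans (le_of_lt ht)) (exp_pos _).le)
    (tendsto_mul_exp_neg_mul_sub_antideriv_atTop hb)]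
  simp

end MulExpIntegral

lemma rpow_le_exp_mul_sub_one {y c : ℝ} (hy : 0 < y) (hc : 0 ≤ c) :
    y ^ c ≤ exp (c * (y - 1)) := by
  rw [rpow_def_of_pos hy, exp_le_exp, mul_comm]
  exact mul_le_mul_of_nonneg_left (log_le_sub_one_of_pos hy) hc

lemma exp_neg_mul_rpow_le {χ a t : ℝ} (hχ : 1 ≤ χ) (ha : a ≤ χ) (ht : χ ≤ t) :
    exp (-t) * t ^ a ≤ exp (-χ) * χ ^ (a - 1) * (t * exp (-(χ⁻¹ * (t - χ)))) := by
  have hχ0 : 0 < χ := zero_lt_one.trans_le hχ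
  have ht0 : 0 < t := hχ0.trans_le ht
  have hratio : (t / χ) ^ (a - 1) ≤ exp ((χ - 1) * (t / χ - 1)) :=
    (rpow_le_rpow_of_exponent_le ((one_le_div hχ0).2 ht) (by linarith)).trans
      (rpow_le_exp_mul_sub_one (div_pos ht0 hχ0) (by linarith))
  have hsplit : t ^ a = t * χ ^ (a - 1) * (t / χ) ^ (a - 1) := by
    rw [div_rpow ht0.le hχ0.le, rpow_sub_one ht0.ne', rpow_sub_one hχ0.ne']
    field_simp [(rpow_pos_of_pos hχ0 a).ne']
  have hexp : exp (-t) * exp ((χ - 1) * (t / χ - 1)) = exp (-χ) * exp (-(χ⁻¹ * (t - χ))) := by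
    rw [← exp_add, ← exp_add]
    congr 1
    field_simp
    ring
  calc exp (-t) * t ^ a = t * χ ^ (a - 1) * (exp (-t) * (t / χ) ^ (a - 1)) := by
        rw [hsplit]; ring
    _ ≤ t * χ ^ (a - 1) * (exp (-t) * exp ((χ - 1) * (t / χ - 1))) := by gcongr
    _ = exp (-χ) * χ ^ (a - 1) * (t * exp (-(χ⁻¹ * (t - χ)))) := by rw [hexp]; ring

lemma norm_cexp_neg_mul_cpow {t : ℝ} (ht : 0 < t) (ω : ℂ) :
    ‖Complex.exp (-(t : ℂ)) * (t : ℂ) ^ ω‖ = exp (-t) * t ^ ω.re := by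
  rw [norm_mul, Complex.norm_exp, Complex.norm_cpow_eq_rpow_re_of_pos ht]
  simp

theorem upper_incomplete_gamma_bound_full_general (χ : ℝ) (hχ : 1 ≤ χ) (ω : ℂ)
    (h₂ : ω.re ≤ χ) :
    ‖∫ t in Set.Ioi χ, Complex.exp (-(t : ℂ)) * (t : ℂ) ^ ω‖ ≤
      2 * Real.exp (-χ) * χ ^ (ω.re + 1) := by
  have hχ0 : 0 < χ := zero_lt_one.trans_le hχ
  have hχinv : 0 < χ⁻¹ := inv_pos.2 hχ0
  calc ‖∫ t in Ioi χ, Complex.exp (-(t : ℂ)) * (t : ℂ) ^ ω‖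
      ≤ ∫ t in Ioi χ, exp (-χ) * χ ^ (ω.re - 1) * (t * exp (-(χ⁻¹ * (t - χ)))) := by
        refine norm_integral_le_of_norm_le
          ((integrableOn_Ioi_mul_exp_neg_mul_sub hχ0.le hχinv).const_mul _) ?_
        filter_upwards [ae_restrict_mem measurableSet_Ioi] with t ht
        rw [norm_cexp_neg_mul_cpow (hχ0.trans ht)]
        exact exp_neg_mul_rpow_le hχ h₂ (le_of_lt ht)
    _ = exp (-χ) * χ ^ (ω.re - 1) * (χ / χ⁻¹ + 1 / χ⁻¹ ^ 2) := by
        rw [integral_const_mul, integral_Ioi_mul_exp_neg_mul_sub hχ0.le hχinv]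
    _ = 2 * exp (-χ) * χ ^ (ω.re + 1) := by
        rw [rpow_sub_one hχ0.ne', rpow_add_one hχ0.ne']
        field_simp
        ring

/-- Upper incomplete gamma bound for `-1 ≤ Re ω ≤ χ`, `χ ≥ 1`:
`|Γ(ω+1, χ)| ≤ 2 e^{-χ} χ^{Re ω + 1}`, where
`Γ(s, χ) = ∫_χ^∞ e^{-t} t^{s-1} dt` (so `Γ(ω+1,χ) = ∫_χ^∞ e^{-t} t^ω dt`). -/
theorem upper_incomplete_gamma_bound_full (χ : ℝ) (hχ : 1 ≤ χ) (ω : ℂ)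
    (h₁ : -1 ≤ ω.re) (h₂ : ω.re ≤ χ) :
    ‖∫ t in Set.Ioi χ, Complex.exp (-(t : ℂ)) * (t : ℂ) ^ ω‖ ≤
      2 * Real.exp (-χ) * χ ^ (ω.re + 1) :=
  upper_incomplete_gamma_bound_full_general χ hχ ω h₂
end
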